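/- The differential ∂ on the strands algebra A(n) satisfies the Leibniz rule: ∂(a·b) = ∂(a)·b + a·∂(b) for all a, b ∈ A(n). -/

import Mathlib

/-- A strands diagram on `n` points `(S, T, φ)`, encoded by the graph of the
bijection `φ : S → T`: a finite set `g` of pairs `(i, φ i)`, such that each
strand has non-negative slope (`i ≤ φ i`) and the first (resp. second)
coordinates of distinct elements are distinct.  Here `S` (resp. `T`) is the set
of first (resp. second) coordinates of elements of `g`. -/
structure StrandsDiagram (n : ℕ) where
  g : Finset (Fin n × Fin n)
  slope : ∀ p ∈ g, p.1 ≤ p.2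
  inj : ∀ p ∈ g, ∀ q ∈ g, (p.1 = q.1 ↔ p.2 = q.2)

namespace StrandsDiagram

theorem ext' {n : ℕ} {a b : StrandsDiagram n} (h : a.g = b.g) : a = b := by
  cases a; cases b; cases h; rfl

instance (n : ℕ) : DecidableEq (StrandsDiagram n) := fun a b =>
  if h : a.g = b.g then .isTrue (ext' h) else .isFalse fun he => h (by cases he; rfl)

noncomputable instance (n : ℕ) : Fintype (StrandsDiagram n) :=
  Fintype.ofInjective StrandsDiagram.g fun _ _ h => ext' h

/-- The set `S` of initial points of the strands. -/
def dom {n : ℕ} (a : StrandsDiagram n) : Finset (Fin n) := a.g.image Prod.fst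

/-- The set `T` of terminal points of the strands. -/
def cod {n : ℕ} (a : StrandsDiagram n) : Finset (Fin n) := a.g.image Prod.snd

/-- The graph of the composition `ψ ∘ φ` of two partial bijections. -/
def compGraph {n : ℕ} (f h : Finset (Fin n × Fin n)) : Finset (Fin n × Fin n) :=
  ((f ×ˢ h).filter fun pq => pq.1.2 = pq.2.1).image fun pq => (pq.1.1, pq.2.2)

/-- The number of inversions (crossings) of a strands diagram with graph `f`. -/
def invCount {n : ℕ} (f : Finset (Fin n × Fin n)) : ℕ :=
  ((f ×ˢ f).filter fun pq => pq.1.1 < pq.2.1 ∧ pq.2.2 < pq.1.2).card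

/-- The underlying `𝔽₂`-vector space of the strands algebra `A(n)`, realized as
the space of `𝔽₂`-valued functions on the set of strands diagrams. -/
abbrev StrandsAlg (n : ℕ) := StrandsDiagram n → ZMod 2

/-- The basis vector of `A(n)` corresponding to a strands diagram. -/
def sd {n : ℕ} (a : StrandsDiagram n) : StrandsAlg n := fun b => if b = a then 1 else 0

/-- The multiplication of the strands algebra `A(n)`: the product of basis
elements `(S, T, φ)·(T′, U, ψ)` is zero if `T ≠ T′`; if `T = T′` it is
`(S, U, ψ ∘ φ)` when `inv(ψ ∘ φ) = inv(φ) + inv(ψ)`, and zero otherwise. -/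
noncomputable def smul' {n : ℕ} (x y : StrandsAlg n) : StrandsAlg n := fun c =>
  ∑ a : StrandsDiagram n, ∑ b : StrandsDiagram n,
    if cod a = dom b ∧ c.g = compGraph a.g b.g ∧
        invCount c.g = invCount a.g + invCount b.g then
      x a * y b
    else 0

/-- The element `u = ∑_S (S, S, id_S)` of `A(n)`: the indicator function of the
strands diagrams all of whose strands are horizontal. -/
def sunit (n : ℕ) : StrandsAlg n := fun a => if ∀ p ∈ a.g, p.1 = p.2 then 1 else 0

/-- The graph obtained by resolving the crossing of the two strands `p` and `q`
(interchanging their terminal points). -/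
def resGraph {n : ℕ} (f : Finset (Fin n × Fin n)) (p q : Fin n × Fin n) :
    Finset (Fin n × Fin n) :=
  insert (p.1, q.2) (insert (q.1, p.2) ((f.erase p).erase q))

/-- The coefficient of the strands diagram `c` in the differential of the strands
diagram `d`: the number (mod 2) of inversions (crossings) of `d` whose resolution
is `c` and decreases the number of inversions by exactly one (i.e. introduces no
double crossing). -/
noncomputable def delCoeff {n : ℕ} (d c : StrandsDiagram n) : ZMod 2 :=
  (((d.g ×ˢ d.g).filter fun pq =>
      pq.1.1 < pq.2.1 ∧ pq.2.2 < pq.1.2 ∧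
      resGraph d.g pq.1 pq.2 = c.g ∧
      invCount (resGraph d.g pq.1 pq.2) + 1 = invCount d.g).card : ZMod 2)

/-- The differential of the strands algebra `A(n)`: on a basis element it is the
sum of all resolutions of single crossings which decrease the number of
crossings by exactly one, extended `𝔽₂`-linearly. -/
noncomputable def sdel {n : ℕ} (x : StrandsAlg n) : StrandsAlg n := fun c =>
  ∑ d : StrandsDiagram n, delCoeff d c * x d

end StrandsDiagram

/-!
Index the strands of a composable pair `(φ, ψ)` by the strands `x` of `ψ ∘ φ`, each with a start
`a x`, a middle point `b x` and an end `c x`. A pair of composite strands crosses in `ψ ∘ φ` if and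
only if it crosses in exactly one of `φ` and `ψ`; a pair crossing in both is a double crossing.
Resolving the crossing of such a pair in `φ`, in `ψ` or in `ψ ∘ φ` gives the same composite
diagram, so the terms of `∂φ · ψ + φ · ∂ψ` match those of `∂(φ · ψ)`, except that each double
crossing contributes once to each of `∂φ · ψ` and `φ · ∂ψ`, and these cancel mod 2. The conditions
on inversion numbers agree on both sides because `inv (ψ ∘ φ) ≤ inv φ + inv ψ` and resolving a
crossing lowers `inv` by at least one.
-/

open Finset

namespace Finset

variable {α β γ : Type*}

theorem card_filter_product_eq_of_bijOn {s : Finset α} {t : Finset β} {π : α → β}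
    (hπ : Set.BijOn π s t) {P : β × β → Prop} {Q : α × α → Prop} [DecidablePred P]
    [DecidablePred Q] (hPQ : ∀ x ∈ s, ∀ y ∈ s, (P (π x, π y) ↔ Q (x, y))) :
    #{uv ∈ t ×ˢ t | P uv} = #{xy ∈ s ×ˢ s | Q xy} := by
  symm
  apply card_nbij (fun xy => (π xy.1, π xy.2))
  · rintro ⟨x, y⟩ hxy
    simp only [coe_filter, mem_product, Set.mem_ofPred_eq] at hxy ⊢
    exact ⟨⟨hπ.mapsTo hxy.1.1, hπ.mapsTo hxy.1.2⟩, (hPQ x hxy.1.1 y hxy.1.2).2 hxy.2⟩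
  · exact (hπ.injOn.prodMap hπ.injOn).mono (by simp +contextual [Set.subset_def])
  · rintro ⟨u, v⟩ huv
    simp only [coe_filter, mem_product, Set.mem_ofPred_eq] at huv
    obtain ⟨x, hx, rfl⟩ := hπ.surjOn huv.1.1
    obtain ⟨y, hy, rfl⟩ := hπ.surjOn huv.1.2
    exact ⟨(x, y), mem_filter.2 ⟨mem_product.2 ⟨hx, hy⟩, (hPQ x hx y hy).1 huv.2⟩, rfl⟩

variable [LinearOrder γ]

theorem card_inversions_add_card_inversions {S : Finset α} {a b c : α → γ}
    (ha : Set.InjOn a S) (hb : Set.InjOn b S) (hc : Set.InjOn c S) (C : α → α → Prop)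
    [DecidableRel C] (hC : ∀ x y, C x y → C y x) :
    #{xy ∈ S ×ˢ S | (a xy.1 < a xy.2 ∧ b xy.2 < b xy.1) ∧ C xy.1 xy.2} +
        #{xy ∈ S ×ˢ S | (b xy.1 < b xy.2 ∧ c xy.2 < c xy.1) ∧ C xy.1 xy.2} =
      #{xy ∈ S ×ˢ S | (a xy.1 < a xy.2 ∧ c xy.2 < c xy.1) ∧ C xy.1 xy.2} +
        2 * #{xy ∈ S ×ˢ S | (a xy.1 < a xy.2 ∧ b xy.2 < b xy.1 ∧ c xy.1 < c xy.2) ∧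
          C xy.1 xy.2} := by
  have hswap : #{xy ∈ S ×ˢ S | (a xy.2 < a xy.1 ∧ b xy.1 < b xy.2 ∧ c xy.2 < c xy.1) ∧
      C xy.1 xy.2} = #{xy ∈ S ×ˢ S | (a xy.1 < a xy.2 ∧ b xy.2 < b xy.1 ∧ c xy.1 < c xy.2) ∧
      C xy.1 xy.2} :=
    card_equiv (Equiv.prodComm α α) fun xy => by
      simp only [mem_filter, mem_product, Equiv.prodComm_apply, Prod.fst_swap, Prod.snd_swap]
      constructor <;> rintro ⟨⟨h1, h2⟩, h3, h4⟩ <;> exact ⟨⟨h2, h1⟩, h3, hC _ _ h4⟩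
  rw [two_mul, ← add_assoc]
  -- Pointwise, the left side counts each `(a, c)`-inversion once, and each double inversion
  -- `(x, y)` twice: once as itself and once through its reverse `(y, x)`.
  nth_rw 2 [← hswap]
  simp only [card_filter, ← sum_add_distrib]
  refine sum_congr rfl fun ⟨x, y⟩ hxy => ?_
  obtain ⟨hx, hy⟩ : x ∈ S ∧ y ∈ S := mem_product.1 hxy
  by_cases hxy : x = y
  · subst hxy; simp
  rcases (ha.ne hx hy hxy).lt_or_gt with h1 | h1 <;>
    rcases (hb.ne hx hy hxy).lt_or_gt with h2 | h2 <;>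
    rcases (hc.ne hx hy hxy).lt_or_gt with h3 | h3 <;>
    by_cases h4 : C x y <;>
    simp [h1, h2, h3, h4, h1.not_gt, h2.not_gt, h3.not_gt]

end Finset

namespace StrandsDiagram

variable {n : ℕ}

abbrev Crosses (p q : Fin n × Fin n) : Prop := p.1 < q.1 ∧ q.2 < p.2

theorem invCount_eq (g : Finset (Fin n × Fin n)) :
    invCount g = #{pq ∈ g ×ˢ g | Crosses pq.1 pq.2} := rfl

def IsPartialBij (g : Finset (Fin n × Fin n)) : Prop :=
  Set.InjOn Prod.fst (g : Set (Fin n × Fin n)) ∧ Set.InjOn Prod.snd (g : Set (Fin n × Fin n))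

theorem isPartialBij_iff {g : Finset (Fin n × Fin n)} :
    IsPartialBij g ↔ ∀ p ∈ g, ∀ q ∈ g, (p.1 = q.1 ↔ p.2 = q.2) := by
  refine ⟨fun hg p hp q hq => ⟨fun h => ?_, fun h => ?_⟩,
    fun hg => ⟨fun p hp q hq h => ?_, fun p hp q hq h => ?_⟩⟩
  · rw [hg.1 hp hq h]
  · rw [hg.2 hp hq h]
  · exact Prod.ext h ((hg p hp q hq).1 h)
  · exact Prod.ext ((hg p hp q hq).2 h) h

theorem isPartialBij (a : StrandsDiagram n) : IsPartialBij a.g :=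
  isPartialBij_iff.2 a.inj

section Resolution

variable {f : Finset (Fin n × Fin n)} {s t : Fin n × Fin n}

theorem mem_resGraph {r : Fin n × Fin n} :
    r ∈ resGraph f s t ↔ r = (s.1, t.2) ∨ r = (t.1, s.2) ∨ (r ∈ f ∧ r ≠ s ∧ r ≠ t) := by
  simp only [resGraph, mem_insert, mem_erase]
  tauto

theorem resGraph_comm : resGraph f s t = resGraph f t s := by
  ext r
  simp only [mem_resGraph]
  tauto

theorem image_fst_resGraph (hs : s ∈ f) (ht : t ∈ f) :
    (resGraph f s t).image Prod.fst = f.image Prod.fst := by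
  ext i
  simp only [mem_image, mem_resGraph]
  grind

theorem image_snd_resGraph (hs : s ∈ f) (ht : t ∈ f) :
    (resGraph f s t).image Prod.snd = f.image Prod.snd := by
  ext i
  simp only [mem_image, mem_resGraph]
  grind

theorem isPartialBij_resGraph (hf : IsPartialBij f) (hs : s ∈ f) (ht : t ∈ f) :
    IsPartialBij (resGraph f s t) := by
  rw [isPartialBij_iff] at hf ⊢
  intro p hp q hq
  rw [mem_resGraph] at hp hq
  have := hf s hs
  have := hf t ht
  grind

def crossNum (p q : Fin n × Fin n) : ℕ :=
  (if Crosses p q then 1 else 0) + if Crosses q p then 1 else 0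

theorem invCount_insert {p : Fin n × Fin n} {g : Finset (Fin n × Fin n)} (hp : p ∉ g) :
    invCount (insert p g) = invCount g + ∑ q ∈ g, crossNum p q := by
  simp only [invCount, card_filter, sum_product, sum_insert hp, crossNum, sum_add_distrib,
    lt_self_iff_false, and_self, if_false, zero_add]
  ring

theorem crossNum_resolve_le (r : Fin n × Fin n) (hst : Crosses s t) :
    crossNum (s.1, t.2) r + crossNum (t.1, s.2) r ≤ crossNum s r + crossNum t r := by
  simp only [crossNum, Crosses, Fin.lt_def] at hst ⊢
  split_ifs <;> omega

theorem invCount_resGraph_add_one_le (hf : IsPartialBij f) (hs : s ∈ f) (ht : t ∈ f)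
    (hst : Crosses s t) : invCount (resGraph f s t) + 1 ≤ invCount f := by
  set R := (f.erase s).erase t
  have hts : t ≠ s := fun h => hst.1.ne (congrArg Prod.fst h).symm
  have hmemR : ∀ {r}, r ∈ R → r ∈ f ∧ r ≠ s ∧ r ≠ t := fun hr => by
    simp only [R, mem_erase] at hr; tauto
  have hf_eq : f = insert s (insert t R) := by
    rw [insert_erase (mem_erase.2 ⟨hts, ht⟩), insert_erase hs]
  have hsR : s ∉ insert t R := by simp [R, hts.symm]
  have htR : t ∉ R := by simp [R]
  have hs'R : (s.1, t.2) ∉ insert (t.1, s.2) R := by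
    simp only [mem_insert, Prod.mk.injEq, not_or]
    exact ⟨fun h => hst.1.ne h.1, fun hr => (hmemR hr).2.1 (hf.1 (hmemR hr).1 hs rfl)⟩
  have ht'R : (t.1, s.2) ∉ R := fun hr => (hmemR hr).2.2 (hf.1 (hmemR hr).1 ht rfl)
  have hR : ∑ r ∈ R, (crossNum (s.1, t.2) r + crossNum (t.1, s.2) r) ≤
      ∑ r ∈ R, (crossNum s r + crossNum t r) :=
    sum_le_sum fun r _ => crossNum_resolve_le r hst
  have hst' : crossNum s t = 1 := by
    rw [crossNum, if_pos hst, if_neg fun h => hst.1.not_gt h.1]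
  have hs't' : crossNum (s.1, t.2) (t.1, s.2) = 0 := by
    simp [crossNum, hst.1.not_gt, hst.2.not_gt]
  rw [sum_add_distrib, sum_add_distrib] at hR
  change invCount (insert (s.1, t.2) (insert (t.1, s.2) R)) + 1 ≤ _
  rw [hf_eq, invCount_insert hs'R, invCount_insert ht'R, sum_insert ht'R,
    invCount_insert hsR, invCount_insert htR, sum_insert htR]
  omega

end Resolution

section Composition

variable {f h : Finset (Fin n × Fin n)} {x y : (Fin n × Fin n) × (Fin n × Fin n)}

def composablePairs (f h : Finset (Fin n × Fin n)) :
    Finset ((Fin n × Fin n) × (Fin n × Fin n)) :=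
  {x ∈ f ×ˢ h | x.1.2 = x.2.1}

def compStrand (x : (Fin n × Fin n) × (Fin n × Fin n)) : Fin n × Fin n := (x.1.1, x.2.2)

theorem mem_composablePairs :
    x ∈ composablePairs f h ↔ x.1 ∈ f ∧ x.2 ∈ h ∧ x.1.2 = x.2.1 := by
  simp [composablePairs, and_assoc]

theorem mem_compGraph {r : Fin n × Fin n} :
    r ∈ compGraph f h ↔ ∃ j, (r.1, j) ∈ f ∧ (j, r.2) ∈ h := by
  simp only [compGraph, mem_image, mem_filter, mem_product]
  constructor
  · rintro ⟨⟨p, q⟩, ⟨⟨hp, hq⟩, hpq⟩, rfl⟩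
    exact ⟨p.2, hp, by rwa [hpq]⟩
  · rintro ⟨j, h1, h2⟩
    exact ⟨((r.1, j), (j, r.2)), ⟨⟨h1, h2⟩, rfl⟩, rfl⟩

theorem isPartialBij_compGraph (hf : IsPartialBij f) (hh : IsPartialBij h) :
    IsPartialBij (compGraph f h) := by
  rw [isPartialBij_iff] at hf hh ⊢
  intro p hp q hq
  rw [mem_compGraph] at hp hq
  obtain ⟨j, hpj, hjp⟩ := hp
  obtain ⟨k, hqk, hkq⟩ := hq
  have := hf _ hpj _ hqk
  have := hh _ hjp _ hkq
  grind

theorem compGraph_resGraph_left (hh : IsPartialBij h) (hx : x ∈ composablePairs f h)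
    (hy : y ∈ composablePairs f h) :
    compGraph (resGraph f x.1 y.1) h =
      resGraph (compGraph f h) (compStrand x) (compStrand y) := by
  rw [mem_composablePairs] at hx hy
  rw [isPartialBij_iff] at hh
  ext r
  simp only [mem_compGraph, mem_resGraph, compStrand]
  grind

theorem compGraph_resGraph_right (hf : IsPartialBij f) (hx : x ∈ composablePairs f h)
    (hy : y ∈ composablePairs f h) :
    compGraph f (resGraph h x.2 y.2) =
      resGraph (compGraph f h) (compStrand x) (compStrand y) := by
  rw [mem_composablePairs] at hx hy
  rw [isPartialBij_iff] at hf
  ext r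
  simp only [mem_compGraph, mem_resGraph, compStrand]
  grind

theorem bijOn_fst_composablePairs (hh : IsPartialBij h)
    (hfh : f.image Prod.snd = h.image Prod.fst) :
    Set.BijOn Prod.fst (composablePairs f h : Set ((Fin n × Fin n) × (Fin n × Fin n)))
      (f : Set (Fin n × Fin n)) := by
  refine ⟨fun x hx => (mem_composablePairs.1 hx).1, fun x hx y hy hxy => ?_, fun p hp => ?_⟩
  · obtain ⟨-, hx2, hx⟩ := mem_composablePairs.1 hx
    obtain ⟨-, hy2, hy⟩ := mem_composablePairs.1 hy
    exact Prod.ext hxy (hh.1 hx2 hy2 (by rw [← hx, ← hy, hxy]))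
  · obtain ⟨u, hu, hup⟩ := mem_image.1 (hfh ▸ mem_image_of_mem Prod.snd hp)
    exact ⟨(p, u), mem_composablePairs.2 ⟨hp, hu, hup.symm⟩, rfl⟩

theorem bijOn_snd_composablePairs (hf : IsPartialBij f)
    (hfh : f.image Prod.snd = h.image Prod.fst) :
    Set.BijOn Prod.snd (composablePairs f h : Set ((Fin n × Fin n) × (Fin n × Fin n)))
      (h : Set (Fin n × Fin n)) := by
  refine ⟨fun x hx => (mem_composablePairs.1 hx).2.1, fun x hx y hy hxy => ?_, fun u hu => ?_⟩
  · obtain ⟨hx1, -, hx⟩ := mem_composablePairs.1 hx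
    obtain ⟨hy1, -, hy⟩ := mem_composablePairs.1 hy
    exact Prod.ext (hf.2 hx1 hy1 (by rw [hx, hy, hxy])) hxy
  · obtain ⟨p, hp, hpu⟩ := mem_image.1 (hfh.symm ▸ mem_image_of_mem Prod.fst hu)
    exact ⟨(p, u), mem_composablePairs.2 ⟨hp, hu, hpu⟩, rfl⟩

theorem bijOn_compStrand (hf : IsPartialBij f) (hh : IsPartialBij h) :
    Set.BijOn compStrand (composablePairs f h : Set ((Fin n × Fin n) × (Fin n × Fin n)))
      (compGraph f h : Set (Fin n × Fin n)) := by
  refine ⟨fun x hx => mem_image_of_mem compStrand hx, fun x hx y hy hxy => ?_,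
    fun r hr => mem_image.1 hr⟩
  obtain ⟨hx1, hx2, hx⟩ := mem_composablePairs.1 hx
  obtain ⟨hy1, hy2, hy⟩ := mem_composablePairs.1 hy
  have h1 : x.1 = y.1 := hf.1 hx1 hy1 (Prod.ext_iff.1 hxy).1
  exact Prod.ext h1 (hh.1 hx2 hy2 (by rw [← hx, ← hy, h1]))

theorem card_resolutions_compGraph (hf : IsPartialBij f) (hh : IsPartialBij h)
    (hfh : f.image Prod.snd = h.image Prod.fst) (C : Finset (Fin n × Fin n) → Prop)
    [DecidablePred C] :
    #{st ∈ f ×ˢ f | Crosses st.1 st.2 ∧ C (compGraph (resGraph f st.1 st.2) h)} +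
        #{uv ∈ h ×ˢ h | Crosses uv.1 uv.2 ∧ C (compGraph f (resGraph h uv.1 uv.2))} =
      #{PQ ∈ compGraph f h ×ˢ compGraph f h | Crosses PQ.1 PQ.2 ∧
          C (resGraph (compGraph f h) PQ.1 PQ.2)} +
        2 * #{xy ∈ composablePairs f h ×ˢ composablePairs f h |
          (xy.1.1.1 < xy.2.1.1 ∧ xy.2.1.2 < xy.1.1.2 ∧ xy.1.2.2 < xy.2.2.2) ∧
            C (resGraph (compGraph f h) (compStrand xy.1) (compStrand xy.2))} := by
  -- Index all three counts by pairs of composable pairs, keyed by start, middle and end points.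
  have hT : ∀ {x}, x ∈ composablePairs f h → x.1 ∈ f ∧ x.2 ∈ h ∧ x.1.2 = x.2.1 :=
    mem_composablePairs.1
  have hfst := (bijOn_fst_composablePairs hh hfh).injOn
  have hsnd := (bijOn_snd_composablePairs hf hfh).injOn
  rw [card_filter_product_eq_of_bijOn (bijOn_fst_composablePairs hh hfh)
      (Q := fun xy => (xy.1.1.1 < xy.2.1.1 ∧ xy.2.1.2 < xy.1.1.2) ∧
        C (resGraph (compGraph f h) (compStrand xy.1) (compStrand xy.2)))
      fun x hx y hy => by rw [compGraph_resGraph_left hh hx hy],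
    card_filter_product_eq_of_bijOn (bijOn_snd_composablePairs hf hfh)
      (Q := fun xy => (xy.1.1.2 < xy.2.1.2 ∧ xy.2.2.2 < xy.1.2.2) ∧
        C (resGraph (compGraph f h) (compStrand xy.1) (compStrand xy.2)))
      fun x hx y hy => by
        rw [compGraph_resGraph_right hf hx hy, (hT hx).2.2, (hT hy).2.2],
    card_filter_product_eq_of_bijOn (bijOn_compStrand hf hh)
      (Q := fun xy => (xy.1.1.1 < xy.2.1.1 ∧ xy.2.2.2 < xy.1.2.2) ∧
        C (resGraph (compGraph f h) (compStrand xy.1) (compStrand xy.2)))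
      fun x _ y _ => Iff.rfl]
  exact card_inversions_add_card_inversions (a := fun x => x.1.1) (b := fun x => x.1.2)
    (c := fun x => x.2.2) (fun x hx y hy hxy => hfst hx hy (hf.1 (hT hx).1 (hT hy).1 hxy))
    (fun x hx y hy hxy => hfst hx hy (hf.2 (hT hx).1 (hT hy).1 hxy))
    (fun x hx y hy hxy => hsnd hx hy (hh.2 (hT hx).2.1 (hT hy).2.1 hxy))
    (fun x y => C (resGraph (compGraph f h) (compStrand x) (compStrand y)))
    fun x y => by rw [resGraph_comm]; exact id

theorem invCount_compGraph_le (hf : IsPartialBij f) (hh : IsPartialBij h)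
    (hfh : f.image Prod.snd = h.image Prod.fst) :
    invCount (compGraph f h) ≤ invCount f + invCount h := by
  have := card_resolutions_compGraph hf hh hfh fun _ => True
  simp only [and_true] at this
  rw [invCount_eq, invCount_eq, invCount_eq]
  omega

end Composition

def resolve (d : StrandsDiagram n) {s t : Fin n × Fin n} (hs : s ∈ d.g) (ht : t ∈ d.g)
    (hst : Crosses s t) : StrandsDiagram n where
  g := resGraph d.g s t
  slope p hp := by
    rcases mem_resGraph.1 hp with rfl | rfl | ⟨hp, -⟩
    · exact hst.1.le.trans (d.slope t ht)
    · exact (d.slope t ht).trans hst.2.le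
    · exact d.slope p hp
  inj := isPartialBij_iff.1 (isPartialBij_resGraph d.isPartialBij hs ht)

def comp (a b : StrandsDiagram n) : StrandsDiagram n where
  g := compGraph a.g b.g
  slope p hp := by
    obtain ⟨j, hpj, hjp⟩ := mem_compGraph.1 hp
    exact (a.slope _ hpj).trans (b.slope _ hjp)
  inj := isPartialBij_iff.1 (isPartialBij_compGraph a.isPartialBij b.isPartialBij)

def mulCoeff (a b c : StrandsDiagram n) : ZMod 2 :=
  if cod a = dom b ∧ c.g = compGraph a.g b.g ∧ invCount c.g = invCount a.g + invCount b.g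
  then 1 else 0

theorem smul'_apply (x y : StrandsAlg n) (c : StrandsDiagram n) :
    smul' x y c = ∑ a, ∑ b, mulCoeff a b c * (x a * y b) := by
  simp only [smul', mulCoeff, ite_mul, one_mul, zero_mul]

theorem sum_delCoeff_mul (d : StrandsDiagram n) (w : Finset (Fin n × Fin n) → ZMod 2) :
    ∑ c, delCoeff d c * w c.g = ∑ st ∈ d.g ×ˢ d.g,
      if Crosses st.1 st.2 ∧ invCount (resGraph d.g st.1 st.2) + 1 = invCount d.g
      then w (resGraph d.g st.1 st.2) else 0 := by
  simp only [delCoeff, natCast_card_filter, sum_mul, ite_mul, one_mul, zero_mul]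
  rw [sum_comm]
  refine sum_congr rfl fun st hst => ?_
  obtain ⟨hs, ht⟩ := mem_product.1 hst
  by_cases hcross : Crosses st.1 st.2
  · rw [sum_eq_single (d.resolve hs ht hcross)]
    · simp [resolve, hcross.1, hcross.2, and_iff_right hcross]
    · intro c _ hc
      rw [if_neg]
      rintro ⟨-, -, hc', -⟩
      exact hc (ext' hc'.symm)
    · simp
  · rw [if_neg fun h => hcross h.1]
    exact sum_eq_zero fun c _ => if_neg fun h => hcross ⟨h.1, h.2.1⟩

theorem sum_mulCoeff_mul_delCoeff (a b c : StrandsDiagram n) :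
    ∑ d, mulCoeff a b d * delCoeff d c = if cod a = dom b then
      (#{PQ ∈ compGraph a.g b.g ×ˢ compGraph a.g b.g | Crosses PQ.1 PQ.2 ∧
        resGraph (compGraph a.g b.g) PQ.1 PQ.2 = c.g ∧
        invCount (resGraph (compGraph a.g b.g) PQ.1 PQ.2) + 1 = invCount a.g + invCount b.g} :
        ZMod 2) else 0 := by
  rw [sum_eq_single (a.comp b) (fun d _ hd => by
      rw [mulCoeff, if_neg fun h => hd (ext' h.2.1), zero_mul]) (by simp)]
  by_cases hab : cod a = dom b
  · have hle := invCount_compGraph_le a.isPartialBij b.isPartialBij hab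
    by_cases hN : invCount (compGraph a.g b.g) = invCount a.g + invCount b.g
    · simp only [mulCoeff, comp, hab, hN, and_self, if_true, one_mul, delCoeff, and_assoc]
    · rw [mulCoeff, if_neg fun h => hN h.2.2, zero_mul, if_pos hab, filter_false_of_mem,
        card_empty, Nat.cast_zero]
      rintro PQ hPQ ⟨hcross, -, hinv⟩
      obtain ⟨hP, hQ⟩ := mem_product.1 hPQ
      have := invCount_resGraph_add_one_le
        (isPartialBij_compGraph a.isPartialBij b.isPartialBij) hP hQ hcross
      omega
  · rw [mulCoeff, if_neg fun h => hab h.1, zero_mul, if_neg hab]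

theorem sum_delCoeff_mul_mulCoeff_left (a b c : StrandsDiagram n) :
    ∑ p, delCoeff a p * mulCoeff p b c = if cod a = dom b then
      (#{st ∈ a.g ×ˢ a.g | Crosses st.1 st.2 ∧
        compGraph (resGraph a.g st.1 st.2) b.g = c.g ∧
        invCount (compGraph (resGraph a.g st.1 st.2) b.g) + 1 = invCount a.g + invCount b.g} :
        ZMod 2) else 0 := by
  refine (sum_delCoeff_mul a fun g => if g.image Prod.snd = dom b ∧ c.g = compGraph g b.g ∧
    invCount c.g = invCount g + invCount b.g then 1 else 0).trans ?_
  split_ifs with hab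
  · rw [natCast_card_filter]
    refine sum_congr rfl fun st hst => ?_
    obtain ⟨hs, ht⟩ := mem_product.1 hst
    rw [← ite_and]
    refine if_congr ⟨fun ⟨⟨hcross, hdrop⟩, _, hc, hinv⟩ =>
      ⟨hcross, hc.symm, by rw [← hc]; omega⟩, fun ⟨hcross, hc, hinv⟩ => ?_⟩ rfl rfl
    have hcod : (resGraph a.g st.1 st.2).image Prod.snd = dom b := by
      rw [image_snd_resGraph hs ht]; exact hab
    have h1 := invCount_resGraph_add_one_le a.isPartialBij hs ht hcross
    have h2 := invCount_compGraph_le (isPartialBij_resGraph a.isPartialBij hs ht)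
      b.isPartialBij hcod
    exact ⟨⟨hcross, by omega⟩, hcod, hc.symm, by rw [← hc]; omega⟩
  · refine sum_eq_zero fun st hst => ?_
    obtain ⟨hs, ht⟩ := mem_product.1 hst
    have hcod : (resGraph a.g st.1 st.2).image Prod.snd ≠ dom b := by
      rwa [image_snd_resGraph hs ht]
    simp [hcod]

theorem sum_delCoeff_mul_mulCoeff_right (a b c : StrandsDiagram n) :
    ∑ q, delCoeff b q * mulCoeff a q c = if cod a = dom b then
      (#{uv ∈ b.g ×ˢ b.g | Crosses uv.1 uv.2 ∧
        compGraph a.g (resGraph b.g uv.1 uv.2) = c.g ∧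
        invCount (compGraph a.g (resGraph b.g uv.1 uv.2)) + 1 = invCount a.g + invCount b.g} :
        ZMod 2) else 0 := by
  refine (sum_delCoeff_mul b fun g => if cod a = g.image Prod.fst ∧ c.g = compGraph a.g g ∧
    invCount c.g = invCount a.g + invCount g then 1 else 0).trans ?_
  split_ifs with hab
  · rw [natCast_card_filter]
    refine sum_congr rfl fun uv huv => ?_
    obtain ⟨hu, hv⟩ := mem_product.1 huv
    rw [← ite_and]
    refine if_congr ⟨fun ⟨⟨hcross, hdrop⟩, _, hc, hinv⟩ =>
      ⟨hcross, hc.symm, by rw [← hc]; omega⟩, fun ⟨hcross, hc, hinv⟩ => ?_⟩ rfl rfl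
    have hdom : cod a = (resGraph b.g uv.1 uv.2).image Prod.fst := by
      rw [image_fst_resGraph hu hv]; exact hab
    have h1 := invCount_resGraph_add_one_le b.isPartialBij hu hv hcross
    have h2 := invCount_compGraph_le a.isPartialBij
      (isPartialBij_resGraph b.isPartialBij hu hv) hdom
    exact ⟨⟨hcross, by omega⟩, hdom, hc.symm, by rw [← hc]; omega⟩
  · refine sum_eq_zero fun uv huv => ?_
    obtain ⟨hu, hv⟩ := mem_product.1 huv
    have hdom : cod a ≠ (resGraph b.g uv.1 uv.2).image Prod.fst := by
      rwa [image_fst_resGraph hu hv]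
    simp [hdom]

theorem sum_mulCoeff_mul_delCoeff_eq (a b c : StrandsDiagram n) :
    ∑ d, mulCoeff a b d * delCoeff d c =
      ∑ p, delCoeff a p * mulCoeff p b c + ∑ q, delCoeff b q * mulCoeff a q c := by
  rw [sum_mulCoeff_mul_delCoeff, sum_delCoeff_mul_mulCoeff_left,
    sum_delCoeff_mul_mulCoeff_right]
  split_ifs with hab
  · have h := congrArg (Nat.cast : ℕ → ZMod 2) <| card_resolutions_compGraph a.isPartialBij
      b.isPartialBij hab fun g => g = c.g ∧ invCount g + 1 = invCount a.g + invCount b.g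
    push_cast at h
    reduce_mod_char at h
    exact h.symm
  · rw [add_zero]

theorem sdel_smul'_apply (x y : StrandsAlg n) (c : StrandsDiagram n) :
    sdel (smul' x y) c = ∑ a, ∑ b, (∑ d, mulCoeff a b d * delCoeff d c) * (x a * y b) := by
  simp only [sdel, smul'_apply, mul_sum, sum_mul]
  rw [sum_comm]
  refine sum_congr rfl fun a _ => ?_
  rw [sum_comm]
  exact sum_congr rfl fun b _ => sum_congr rfl fun d _ => by ring

theorem smul'_sdel_left_apply (x y : StrandsAlg n) (c : StrandsDiagram n) :
    smul' (sdel x) y c = ∑ a, ∑ b, (∑ p, delCoeff a p * mulCoeff p b c) * (x a * y b) := by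
  simp only [sdel, smul'_apply, mul_sum, sum_mul]
  rw [sum_comm_cycle]
  refine sum_congr rfl fun a _ => ?_
  rw [sum_comm]
  exact sum_congr rfl fun b _ => sum_congr rfl fun p _ => by ring

theorem smul'_sdel_right_apply (x y : StrandsAlg n) (c : StrandsDiagram n) :
    smul' x (sdel y) c = ∑ a, ∑ b, (∑ q, delCoeff b q * mulCoeff a q c) * (x a * y b) := by
  simp only [sdel, smul'_apply, mul_sum, sum_mul]
  refine sum_congr rfl fun a _ => ?_
  rw [sum_comm]
  exact sum_congr rfl fun b _ => sum_congr rfl fun q _ => by ring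

end StrandsDiagram

open StrandsDiagram in
/-- The differential `∂` on the strands algebra `A(n)`
satisfies the Leibniz rule `∂(a·b) = ∂(a)·b + a·∂(b)`. -/
theorem strandsAlg_leibniz (n : ℕ) :
    ∀ a b : StrandsAlg n, sdel (smul' a b) = smul' (sdel a) b + smul' a (sdel b) := by
  intro a b
  funext c
  simp only [Pi.add_apply, sdel_smul'_apply, smul'_sdel_left_apply, smul'_sdel_right_apply,
    sum_mulCoeff_mul_delCoeff_eq, add_mul, sum_add_distrib]
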